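/- arXiv:1610.09438 — 2 statements merged into one kernel-verified Lean document; each statement's English description precedes it below -/
import Mathlib

section
/- Let n ≥ 2 and let u₁, …, u_m ∈ ℝⁿ be distinct points. Then the functions ω ↦ exp(i⟨u_ℓ, ω⟩), for 1 ≤ ℓ ≤ m, are linearly independent as complex-valued functions on the unit sphere S^{n-1}. -/
/-!
Choose a unit vector `v` on which the `u ℓ` have pairwise distinct projections `b ℓ = ⟪u ℓ, v⟫`
(a finite union of hyperplanes does not cover the space) and a unit vector `w ⊥ v`. On the great
circle `θ ↦ cos θ • w + sin θ • v` a vanishing combination becomes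
`∑ c ℓ exp(i (a ℓ cos θ + b ℓ sin θ)) = 0`. The left side is entire in `θ`, so it also vanishes
at `θ = -i t`, where it reads `∑ c ℓ exp(i a ℓ cosh t) exp(b ℓ sinh t)`. As `t → ∞`, the term with
the largest `b ℓ` among the nonzero `c ℓ` dominates all the others, which is absurd.
-/

open Complex Filter Function Topology Finset Module
open scoped RealInnerProductSpace

theorem Real.tendsto_sinh_atTop : Tendsto Real.sinh atTop atTop :=
  tendsto_atTop_mono' atTop ((eventually_ge_atTop 0).mono fun _ => Real.self_le_sinh_iff.mpr)
    tendsto_id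

theorem Differentiable.eq_zero_of_forall_ofReal {f : ℂ → ℂ} (hf : Differentiable ℂ f)
    (h : ∀ x : ℝ, f x = 0) : f = 0 := by
  have hreal : Tendsto ((↑) : ℝ → ℂ) (𝓝[≠] 0) (𝓝[≠] 0) :=
    tendsto_nhdsWithin_of_tendsto_nhds_of_eventually_within _
      ((continuous_ofReal.tendsto' 0 0 ofReal_zero).mono_left nhdsWithin_le_nhds)
      (eventually_nhdsWithin_of_forall fun _ hx => ofReal_ne_zero.mpr hx)
  funext z
  exact (analyticOnNhd_univ_iff_differentiable.mpr hf).eqOn_zero_of_preconnected_of_frequently_eq_zero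
    isPreconnected_univ (Set.mem_univ 0) (hreal.frequently (.of_forall h)) (Set.mem_univ z)

theorem eq_zero_of_eventually_sum_mul_exp_eq_zero {ι α : Type*} [Fintype ι] {l : Filter α}
    [l.NeBot] {s : α → ℝ} (hs : Tendsto s l atTop) {b : ι → ℝ} (hb : Injective b)
    {g : ι → α → ℂ} (hg : ∀ i x, ‖g i x‖ = 1) {c : ι → ℂ}
    (h : ∀ᶠ x in l, ∑ i, c i * g i x * Real.exp (b i * s x) = 0) : c = 0 := by
  classical
  by_contra hc
  obtain ⟨i₀, hi₀, hmax⟩ := (univ.filter fun i => c i ≠ 0).exists_max_image b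
    (by simpa [filter_nonempty_iff, funext_iff] using hc)
  have hnorm : ∀ j x, ‖c j * g j x * Real.exp (b j * s x)‖ = ‖c j‖ * Real.exp (b j * s x) := by
    intro j x
    rw [norm_mul, norm_mul, hg, norm_real, Real.norm_of_nonneg (Real.exp_pos _).le, mul_one]
  have hbound : ∀ᶠ x in l,
      ‖c i₀‖ ≤ ∑ j ∈ univ.erase i₀, ‖c j‖ * Real.exp ((b j - b i₀) * s x) := by
    filter_upwards [h] with x hx
    rw [← add_sum_erase _ _ (mem_univ i₀), add_eq_zero_iff_eq_neg] at hx
    have := calc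
      ‖c i₀‖ * Real.exp (b i₀ * s x)
          = ‖∑ j ∈ univ.erase i₀, c j * g j x * Real.exp (b j * s x)‖ := by
        rw [← hnorm, hx, norm_neg]
      _ ≤ ∑ j ∈ univ.erase i₀, ‖c j‖ * Real.exp (b j * s x) :=
        (norm_sum_le _ _).trans_eq (sum_congr rfl fun j _ => hnorm j x)
    rw [← le_div_iff₀ (Real.exp_pos _), sum_div] at this
    simpa only [mul_div_assoc, ← Real.exp_sub, sub_mul] using this
  have hlim : Tendsto (fun x => ∑ j ∈ univ.erase i₀, ‖c j‖ * Real.exp ((b j - b i₀) * s x))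
      l (𝓝 0) := by
    rw [← sum_const_zero (s := univ.erase i₀)]
    refine tendsto_finsetSum _ fun j hj => ?_
    by_cases hcj : c j = 0
    · simp [hcj]
    have hlt : b j < b i₀ :=
      (hmax j (by simpa using hcj)).lt_of_ne fun e => (ne_of_mem_erase hj) (hb e)
    simpa using (Real.tendsto_exp_atBot.comp
      (hs.const_mul_atTop_of_neg (sub_neg.mpr hlt))).const_mul ‖c j‖
  exact (mem_filter.mp hi₀).2 (norm_le_zero_iff.mp (ge_of_tendsto hlim hbound))

theorem linearIndependent_exp_cos_sin {ι : Type*} [Fintype ι] (a : ι → ℝ) {b : ι → ℝ}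
    (hb : Injective b) :
    LinearIndependent ℂ fun i (θ : ℝ) => exp (I * ↑(a i * Real.cos θ + b i * Real.sin θ)) := by
  rw [Fintype.linearIndependent_iff]
  intro c hc
  set F : ℂ → ℂ := fun z => ∑ i, c i * exp (I * (a i * cos z + b i * sin z))
  have hF : F = 0 := by
    refine Differentiable.eq_zero_of_forall_ofReal (by fun_prop) fun θ => ?_
    simpa [F] using congrFun hc θ
  refine congrFun <| eq_zero_of_eventually_sum_mul_exp_eq_zero Real.tendsto_sinh_atTop hb
    (g := fun i t => exp ((a i * Real.cosh t : ℝ) * I)) (fun i t => norm_exp_ofReal_mul_I _)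
    (.of_forall fun t => ?_)
  refine .trans (sum_congr rfl fun i _ => ?_) (congrFun hF (-t * I))
  rw [mul_assoc, ofReal_exp, ← exp_add]
  simp only [neg_mul, cos_neg, sin_neg, cos_mul_I, sin_mul_I]
  push_cast
  congr 2
  linear_combination (b i * sinh t) * I_sq

variable {E : Type*} [NormedAddCommGroup E] [InnerProductSpace ℝ E]

theorem exists_ne_zero_inner_injective [Nontrivial E] {ι : Type*} [Finite ι] {u : ι → E}
    (hu : Injective u) : ∃ v : E, v ≠ 0 ∧ Injective fun i => ⟪u i, v⟫ := by
  classical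
  have := Fintype.ofFinite ι
  let s : Finset (Submodule ℝ E) :=
    insert ⊥ ((univ.filter fun p : ι × ι => p.1 ≠ p.2).image fun p => (ℝ ∙ (u p.1 - u p.2))ᗮ)
  have hs : ⊤ ∉ s := by
    simp only [s, mem_insert, mem_image, mem_filter, Submodule.orthogonal_eq_top_iff,
      Submodule.span_singleton_eq_bot, sub_eq_zero]
    push Not
    exact ⟨top_ne_bot, fun p hp h => hp.2 (hu h)⟩
  obtain ⟨v, hv⟩ :=
    (Set.ne_univ_iff_exists_notMem _).mp (Subspace.biUnion_ne_univ_of_top_notMem hs)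
  simp only [s, Set.mem_iUnion, not_exists, mem_insert, mem_image, mem_filter] at hv
  refine ⟨v, fun h => hv ⊥ (.inl rfl) (by simp [h]), fun i j hij => ?_⟩
  by_contra hne
  refine hv _ (.inr ⟨(i, j), ⟨mem_univ _, hne⟩, rfl⟩) ?_
  simp only [SetLike.mem_coe, Submodule.mem_orthogonal_singleton_iff_inner_right, inner_sub_left]
  exact sub_eq_zero.mpr hij

theorem exists_norm_eq_one_inner_injective [Nontrivial E] {ι : Type*} [Finite ι] {u : ι → E}
    (hu : Injective u) : ∃ v : E, ‖v‖ = 1 ∧ Injective fun i => ⟪u i, v⟫ := by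
  obtain ⟨v, hv, hinj⟩ := exists_ne_zero_inner_injective hu
  refine ⟨‖v‖⁻¹ • v, norm_smul_inv_norm hv, fun i j hij => hinj ?_⟩
  simpa [real_inner_smul_right, hv] using hij

theorem exists_norm_eq_one_inner_eq_zero [FiniteDimensional ℝ E] (hE : 2 ≤ finrank ℝ E) (v : E) :
    ∃ w : E, ‖w‖ = 1 ∧ ⟪w, v⟫ = 0 := by
  have : (ℝ ∙ v)ᗮ ≠ ⊥ := by
    rw [Ne, Submodule.orthogonal_eq_bot_iff]
    intro h
    have := finrank_span_le_card (R := ℝ) ({v} : Set E)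
    rw [h, finrank_top] at this
    simp only [Set.toFinset_singleton, card_singleton] at this
    omega
  obtain ⟨w, hw, hw0⟩ := Submodule.exists_mem_ne_zero_of_ne_bot this
  refine ⟨‖w‖⁻¹ • w, norm_smul_inv_norm hw0, ?_⟩
  rw [real_inner_smul_left, Submodule.mem_orthogonal_singleton_iff_inner_left.mp hw, mul_zero]

theorem cos_smul_add_sin_smul_mem_sphere {v w : E} (hv : ‖v‖ = 1) (hw : ‖w‖ = 1)
    (hwv : ⟪w, v⟫ = 0) (θ : ℝ) : Real.cos θ • w + Real.sin θ • v ∈ Metric.sphere (0 : E) 1 := by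
  rw [mem_sphere_zero_iff_norm, ← pow_eq_one_iff_of_nonneg (norm_nonneg _) two_ne_zero,
    norm_add_sq_real, real_inner_smul_left, real_inner_smul_right, hwv, norm_smul, norm_smul,
    hv, hw]
  simp

theorem linearIndependent_exp_inner_sphere [FiniteDimensional ℝ E] (hE : 2 ≤ finrank ℝ E)
    {ι : Type*} [Fintype ι] {u : ι → E} (hu : Injective u) :
    LinearIndependent ℂ fun i (ω : Metric.sphere (0 : E) 1) => exp (I * ⟪u i, (ω : E)⟫) := by
  have : Nontrivial E := Module.nontrivial_of_finrank_pos (R := ℝ) (by omega)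
  obtain ⟨v, hv, hinj⟩ := exists_norm_eq_one_inner_injective hu
  obtain ⟨w, hw, hwv⟩ := exists_norm_eq_one_inner_eq_zero hE v
  let γ : ℝ → Metric.sphere (0 : E) 1 := fun θ =>
    ⟨_, cos_smul_add_sin_smul_mem_sphere hv hw hwv θ⟩
  refine LinearIndependent.of_comp (LinearMap.funLeft ℂ ℂ γ) ?_
  convert linearIndependent_exp_cos_sin (fun i => ⟪u i, w⟫) hinj using 1
  ext i θ
  simp [γ, inner_add_right, real_inner_smul_right, mul_comm]

/-- Linear independence on the sphere of the exponentials `ω ↦ exp(i⟨u ℓ, ω⟩)`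
for distinct points `u ℓ ∈ ℝⁿ`, `n ≥ 2`. -/
theorem exp_linearIndependent_on_sphere (n m : ℕ) (hn : 2 ≤ n)
    (u : Fin m → EuclideanSpace ℝ (Fin n)) (hu : Function.Injective u) :
    LinearIndependent ℂ
      (fun ℓ : Fin m =>
        (fun ω : Metric.sphere (0 : EuclideanSpace ℝ (Fin n)) 1 =>
          Complex.exp (Complex.I * (inner ℝ (u ℓ) (ω : EuclideanSpace ℝ (Fin n)) : ℝ))
          : Metric.sphere (0 : EuclideanSpace ℝ (Fin n)) 1 → ℂ)) :=
  linearIndependent_exp_inner_sphere (by simpa using hn) hu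
end

section
/- The spherical integral identity: ∫₀^π ∫₀^{2π} |3 sin²θ cos²φ − 1| sinθ dφ dθ = (16π)/(3√3) (equivalently, the average over S² of |3 x₁² − 1| equals 4/(3√3)). -/
/-!
For fixed `θ` the inner integral depends only on `u = cos θ`. By the symmetries of `cos²` it is
four times an integral over a quarter period, on which `3 (1 - u²) cos² φ - 1` changes sign at most
once, at `φ = arctan √(2 - 3u²)`; this gives it in closed form. The substitution `u = cos θ` turns
the outer integral into `∫₀¹` of that closed form, which is elementary on each side of the critical
latitude `u = √(2/3)`.
-/

open Real intervalIntegral Set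

namespace intervalIntegral

theorem integral_eq_two_mul_integral_of_symm {f : ℝ → ℝ} {a b : ℝ}
    (hf : IntervalIntegrable f MeasureTheory.volume a b) (hsymm : ∀ x, f (a + b - x) = f x) :
    ∫ x in a..b, f x = 2 * ∫ x in a..(a + b) / 2, f x := by
  have hmid : (a + b) / 2 ∈ uIcc a b := by
    rcases le_total a b with h | h
    · rw [uIcc_of_le h]; constructor <;> linarith
    · rw [uIcc_of_ge h]; constructor <;> linarith
  have hsecond : ∫ x in (a + b) / 2..b, f x = ∫ x in a..(a + b) / 2, f x := by
    calc ∫ x in (a + b) / 2..b, f x = ∫ x in (a + b) / 2..b, f (a + b - x) := by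
          simp only [hsymm]
      _ = ∫ x in a..(a + b) / 2, f x := by
          rw [integral_comp_sub_left fun x => f x]; ring_nf
  rw [← integral_add_adjacent_intervals (hf.mono_set (uIcc_subset_uIcc_left hmid))
    (hf.mono_set (uIcc_subset_uIcc_right hmid)), hsecond, two_mul]

theorem integral_abs_eq_of_sign_change {f F : ℝ → ℝ} {a b c : ℝ}
    (hac : a ≤ c) (hcb : c ≤ b) (hF : ∀ x, HasDerivAt F (f x) x) (hf : Continuous f)
    (hpos : ∀ x ∈ Ioo a c, 0 ≤ f x) (hneg : ∀ x ∈ Ioo c b, f x ≤ 0) :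
    ∫ x in a..b, |f x| = 2 * F c - F a - F b := by
  rw [← integral_add_adjacent_intervals (hf.abs.intervalIntegrable a c)
      (hf.abs.intervalIntegrable c b),
    integral_congr_Ioo_of_le hac fun x hx => abs_of_nonneg (hpos x hx),
    integral_congr_Ioo_of_le hcb fun x hx => abs_of_nonpos (hneg x hx), integral_neg,
    integral_eq_sub_of_hasDerivAt (fun x _ => hF x) (hf.intervalIntegrable a c),
    integral_eq_sub_of_hasDerivAt (fun x _ => hF x) (hf.intervalIntegrable c b)]
  ring

theorem integral_comp_cos_mul_sin {g : ℝ → ℝ} (hg : Continuous g) :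
    ∫ θ in 0..π / 2, g (cos θ) * sin θ = ∫ u in 0..1, g u := by
  have h := integral_comp_mul_deriv (a := 0) (b := π / 2) (fun θ _ => hasDerivAt_cos θ)
    (by fun_prop) hg
  simp only [Function.comp_apply, mul_neg, integral_neg, cos_zero, cos_pi_div_two] at h
  rwa [integral_symm 0 1, neg_inj] at h

end intervalIntegral

theorem hasDerivAt_mul_cos_sq_sub_one_primitive (a x : ℝ) :
    HasDerivAt (fun φ => (a / 2 - 1) * φ + a / 2 * (sin φ * cos φ)) (a * cos x ^ 2 - 1) x := by
  have h := ((hasDerivAt_id x).const_mul (a / 2 - 1)).add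
    (((hasDerivAt_sin x).mul (hasDerivAt_cos x)).const_mul (a / 2))
  refine h.congr_deriv ?_
  linear_combination (-a / 2) * sin_sq_add_cos_sq x

theorem integral_abs_mul_cos_sq_sub_one_of_le_one {a : ℝ} (ha : a ≤ 1) :
    ∫ φ in 0..π / 2, |a * cos φ ^ 2 - 1| = (2 - a) * π / 4 := by
  rw [integral_abs_eq_of_sign_change le_rfl pi_div_two_pos.le
    (hasDerivAt_mul_cos_sq_sub_one_primitive a) (by fun_prop) (by simp)]
  · simp only [sin_zero, cos_pi_div_two]
    ring
  · intro φ _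
    rcases le_total a 0 with h | h
    · nlinarith [sq_nonneg (cos φ)]
    · nlinarith [cos_sq_le_one φ]

theorem integral_abs_mul_cos_sq_sub_one_of_one_le {a : ℝ} (ha : 1 ≤ a) :
    ∫ φ in 0..π / 2, |a * cos φ ^ 2 - 1| =
      (a - 2) * arctan √(a - 1) + √(a - 1) + (2 - a) * π / 4 := by
  set c := arctan √(a - 1)
  have hsq : √(a - 1) ^ 2 = a - 1 := sq_sqrt (by linarith)
  have hsqa : √a ^ 2 = a := sq_sqrt (by linarith)
  have hcos : cos c = 1 / √a := by rw [cos_arctan, hsq, add_sub_cancel]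
  have hsin : sin c = √(a - 1) / √a := by rw [sin_arctan, hsq, add_sub_cancel]
  have hc0 : 0 ≤ c := arctan_nonneg.2 (sqrt_nonneg _)
  have hc : c ≤ π / 2 := (arctan_lt_pi_div_two _).le
  have hcos_sq : a * cos c ^ 2 = 1 := by
    rw [hcos, div_pow, hsqa]; field_simp
  have hcos_nonneg : 0 ≤ cos c := (cos_arctan_pos _).le
  rw [integral_abs_eq_of_sign_change hc0 hc (hasDerivAt_mul_cos_sq_sub_one_primitive a)
    (by fun_prop)]
  · have hsa : a * (sin c * cos c) = √(a - 1) := by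
      rw [hsin, hcos]; field_simp; rw [hsqa]; ring
    simp only [sin_zero, cos_pi_div_two]
    linear_combination hsa
  · intro φ hφ
    have hle := cos_le_cos_of_nonneg_of_le_pi hφ.1.le (by linarith [pi_pos]) hφ.2.le
    nlinarith [mul_self_le_mul_self hcos_nonneg hle]
  · intro φ hφ
    have hle := cos_le_cos_of_nonneg_of_le_pi hc0 (by linarith [pi_pos, hφ.2]) hφ.1.le
    have hnonneg := cos_nonneg_of_mem_Icc ⟨by linarith [pi_pos, hφ.1], hφ.2.le⟩
    nlinarith [mul_self_le_mul_self hnonneg hle]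

-- Found by integrating `(1 - 3u²) arctan √(2 - 3u²)` by parts.
theorem hasDerivAt_latitude_primitive {u : ℝ} (hu : 3 * u ^ 2 < 2) :
    HasDerivAt (fun u => (u - u ^ 3) * arctan √(2 - 3 * u ^ 2) + u * √(2 - 3 * u ^ 2) / 3
        + 4 / (3 * √3) * arcsin (√(3 / 2) * u) + π / 4 * (u ^ 3 - u))
      ((1 - 3 * u ^ 2) * arctan √(2 - 3 * u ^ 2) + √(2 - 3 * u ^ 2)
        + (3 * u ^ 2 - 1) * π / 4) u := by
  set v := √(2 - 3 * u ^ 2) with hv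
  have hv_pos : 0 < v := sqrt_pos.2 (by linarith)
  have hv_sq : v ^ 2 = 2 - 3 * u ^ 2 := sq_sqrt (by linarith)
  have hs32 : √(3 / 2) ^ 2 = 3 / 2 := sq_sqrt (by norm_num)
  have hw_sq : (√(3 / 2) * u) ^ 2 < 1 := by rw [mul_pow, hs32]; linarith
  have hw : √(1 - (√(3 / 2) * u) ^ 2) = v / √2 := by
    rw [hv, ← sqrt_div' _ (by norm_num)]; congr 1; rw [mul_pow, hs32]; ring
  have hs : √(3 / 2) = √3 / √2 := sqrt_div' _ (by norm_num)
  have hpoly : HasDerivAt (fun u : ℝ => 2 - 3 * u ^ 2) (-(6 * u)) u := by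
    refine (((hasDerivAt_pow 2 u).const_mul 3).const_sub 2).congr_deriv ?_
    push_cast; ring
  have hsqrt := hpoly.sqrt (by linarith)
  have harctan := hsqrt.arctan
  have harcsin := (hasDerivAt_arcsin (x := √(3 / 2) * u)
    (by nlinarith [sq_nonneg (√(3 / 2) * u + 1)]) (by nlinarith [sq_nonneg (√(3 / 2) * u - 1)])).comp u
    ((hasDerivAt_id u).const_mul (√(3 / 2)))
  have h := ((((hasDerivAt_id u).sub (hasDerivAt_pow 3 u)).mul harctan).add
    (((hasDerivAt_id u).mul hsqrt).div_const 3)).add (harcsin.const_mul (4 / (3 * √3))) |>.add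
    (((hasDerivAt_pow 3 u).sub (hasDerivAt_id u)).const_mul (π / 4))
  refine h.congr_deriv ?_
  have hden : 1 + (2 - 3 * u ^ 2) ≠ 0 := by linarith
  simp only [id, Pi.sub_apply, ← hv, hv_sq]
  rw [hw, hs]
  push_cast
  field_simp
  linear_combination (-48 * (1 - u ^ 2)) * hv_sq

theorem integral_zero_two_pi_abs_mul_cos_sq_sub_one_eq_four_mul (a : ℝ) :
    ∫ φ in 0..2 * π, |a * cos φ ^ 2 - 1| = 4 * ∫ φ in 0..π / 2, |a * cos φ ^ 2 - 1| := by
  have hf : Continuous fun φ => |a * cos φ ^ 2 - 1| := by fun_prop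
  have hhalf := integral_eq_two_mul_integral_of_symm (hf.intervalIntegrable 0 (2 * π))
    fun φ => by simp [cos_two_pi_sub]
  have hquarter := integral_eq_two_mul_integral_of_symm (hf.intervalIntegrable 0 π)
    fun φ => by simp [cos_pi_sub]
  rw [show (0 + 2 * π) / 2 = π by ring] at hhalf
  rw [zero_add] at hquarter
  rw [hhalf, hquarter]
  ring

noncomputable def latitudeIntegral (u : ℝ) : ℝ :=
  ∫ φ in 0..2 * π, |3 * (1 - u ^ 2) * cos φ ^ 2 - 1|

theorem continuous_latitudeIntegral : Continuous latitudeIntegral := by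
  unfold latitudeIntegral
  fun_prop

theorem latitudeIntegral_of_two_le_three_mul_sq {u : ℝ} (hu : 2 ≤ 3 * u ^ 2) :
    latitudeIntegral u = (3 * u ^ 2 - 1) * π := by
  rw [latitudeIntegral, integral_zero_two_pi_abs_mul_cos_sq_sub_one_eq_four_mul,
    integral_abs_mul_cos_sq_sub_one_of_le_one (by linarith)]
  ring

theorem latitudeIntegral_of_three_mul_sq_le_two {u : ℝ} (hu : 3 * u ^ 2 ≤ 2) :
    latitudeIntegral u = 4 * ((1 - 3 * u ^ 2) * arctan √(2 - 3 * u ^ 2) + √(2 - 3 * u ^ 2)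
      + (3 * u ^ 2 - 1) * π / 4) := by
  rw [latitudeIntegral, integral_zero_two_pi_abs_mul_cos_sq_sub_one_eq_four_mul,
    integral_abs_mul_cos_sq_sub_one_of_one_le (by linarith),
    show 3 * (1 - u ^ 2) - 1 = 2 - 3 * u ^ 2 by ring]
  ring

theorem integral_latitudeIntegral : ∫ u in 0..1, latitudeIntegral u = 8 * π / (3 * √3) := by
  set u₀ := √(2 / 3)
  have hu₀ : 3 * u₀ ^ 2 = 2 := by rw [sq_sqrt (by norm_num)]; norm_num
  have hu₀_nonneg : 0 ≤ u₀ := sqrt_nonneg _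
  have hu₀_le : u₀ ≤ 1 := sqrt_le_one.2 (by norm_num)
  have hu₀_arcsin : arcsin (√(3 / 2) * u₀) = π / 2 := by
    rw [← sqrt_mul (by norm_num)]; norm_num
  rw [← integral_add_adjacent_intervals (continuous_latitudeIntegral.intervalIntegrable 0 u₀)
    (continuous_latitudeIntegral.intervalIntegrable u₀ 1)]
  have hequator : ∫ u in 0..u₀, latitudeIntegral u =
      4 * (π / 4 * (u₀ ^ 3 - u₀) + 4 / (3 * √3) * (π / 2)) := by
    rw [integral_congr fun u hu => latitudeIntegral_of_three_mul_sq_le_two ?_, integral_const_mul,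
      integral_eq_sub_of_hasDerivAt_of_le hu₀_nonneg (by fun_prop)
        (fun u hu => hasDerivAt_latitude_primitive (by nlinarith [hu.1, hu.2]))
        (by apply Continuous.intervalIntegrable; fun_prop)]
    · simp only [hu₀, hu₀_arcsin, sub_self, sqrt_zero, arctan_zero, mul_zero, zero_mul,
        add_zero, zero_div, ne_eq, OfNat.ofNat_ne_zero, not_false_eq_true, zero_pow, arcsin_zero]
      ring
    · rw [uIcc_of_le hu₀_nonneg] at hu
      nlinarith [hu.1, hu.2]
  have hpole : ∫ u in u₀..1, latitudeIntegral u = -(π * (u₀ ^ 3 - u₀)) := by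
    rw [integral_congr fun u hu => latitudeIntegral_of_two_le_three_mul_sq ?_,
      integral_eq_sub_of_hasDerivAt (f := fun u => π * (u ^ 3 - u)) (fun u _ => ?_)
        (by apply Continuous.intervalIntegrable; fun_prop)]
    · ring
    · exact (((hasDerivAt_pow 3 u).sub (hasDerivAt_id u)).const_mul π).congr_deriv (by simp only [Nat.cast_ofNat]; ring)
    · rw [uIcc_of_le hu₀_le] at hu
      nlinarith [hu.1, hu.2]
  rw [hequator, hpole]
  ring

/-- The spherical integral identity
`∫₀^π ∫₀^{2π} |3 sin²θ cos²φ − 1| sinθ dφ dθ = 16π/(3√3)`. -/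
theorem spherical_integral_abs :
    (∫ θ in (0 : ℝ)..π, ∫ φ in (0 : ℝ)..(2 * π),
      |3 * Real.sin θ ^ 2 * Real.cos φ ^ 2 - 1| * Real.sin θ) =
    16 * π / (3 * Real.sqrt 3) := by
  have hlatitude : ∀ θ, ∫ φ in (0 : ℝ)..(2 * π), |3 * sin θ ^ 2 * cos φ ^ 2 - 1| * sin θ =
      latitudeIntegral (cos θ) * sin θ := fun θ => by
    rw [integral_mul_const, latitudeIntegral, sin_sq]
  have hf : Continuous fun θ => latitudeIntegral (cos θ) * sin θ :=
    (continuous_latitudeIntegral.comp continuous_cos).mul continuous_sin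
  simp only [hlatitude]
  rw [integral_eq_two_mul_integral_of_symm (hf.intervalIntegrable 0 π)
      fun θ => by simp [latitudeIntegral], zero_add, integral_comp_cos_mul_sin
      continuous_latitudeIntegral, integral_latitudeIntegral]
  ring
end
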